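/- Let F be analytic on the unit disk 𝔻 and let n ≥ 1 be an integer. Define F̃_n on {z ∈ ℂ : |z| > 1} by F̃_n(z) = Σ_{i=0}^{n} ((−1)^i / i!) (z* − z)^i F^{(i)}(z*), where z* = 1/conj(z). Then F̃_n is of class C¹ on {|z| > 1} (as a function of the two real variables), and for all |z| > 1 its Cauchy–Riemann derivative is ∂̄F̃_n(z) = ((−1)^{n+1} / n!) (z* − z)^n (z*)² F^{(n+1)}(z*). -/

import Mathlib

open MeasureTheory Metric Complex Set
open scoped Real

noncomputable section

/-- The Cauchy–Riemann (Wirtinger) operator `∂̄g = (1/2)(∂g/∂x + i ∂g/∂y)`. -/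
def dbar (g : ℂ → ℂ) (z : ℂ) : ℂ :=
  (1 / 2 : ℂ) * (fderiv ℝ g z 1 + Complex.I * fderiv ℝ g z Complex.I)

/-- `z* = 1/conj(z)`. -/
def zstar (z : ℂ) : ℂ := ((starRingEnd ℂ) z)⁻¹

/-!
`∂̄` obeys the Leibniz rule and the chain rule with a holomorphic outer function, and
`∂̄ z = 0`, `∂̄ z̄ = 1`, hence `∂̄ z* = -(z*)²`. So the `i`-th term of `F̃_n` has
`∂̄`-derivative `-(z*)² (-1)^i/i! (i (z* - z)^(i-1) F^(i)(z*) + (z* - z)^i F^(i+1)(z*))`,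
and the sum over `i` telescopes to its top-order piece. Smoothness holds because `z ↦ z*`
is smooth off `0` and maps `{|z| > 1}` into `𝔻`, where all `F^(i)` are holomorphic.
-/

section WirtingerCalculus

variable {f g : ℂ → ℂ} {z : ℂ}

lemma dbar_sub (hf : DifferentiableAt ℝ f z) (hg : DifferentiableAt ℝ g z) :
    dbar (fun w => f w - g w) z = dbar f z - dbar g z := by
  simp only [dbar, fderiv_fun_sub hf hg, sub_apply]
  ring

lemma dbar_sum {ι : Type*} (s : Finset ι) {f : ι → ℂ → ℂ}
    (hf : ∀ i ∈ s, DifferentiableAt ℝ (f i) z) :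
    dbar (fun w => ∑ i ∈ s, f i w) z = ∑ i ∈ s, dbar (f i) z := by
  simp only [dbar, fderiv_fun_sum hf, sum_apply, Finset.mul_sum, ← Finset.sum_add_distrib]

lemma dbar_mul (hf : DifferentiableAt ℝ f z) (hg : DifferentiableAt ℝ g z) :
    dbar (fun w => f w * g w) z = dbar f z * g z + f z * dbar g z := by
  simp only [dbar, fderiv_fun_mul hf hg, add_apply, smul_apply, smul_eq_mul]
  ring

lemma dbar_comp (hg : DifferentiableAt ℂ g (f z)) (hf : DifferentiableAt ℝ f z) :
    dbar (fun w => g (f w)) z = deriv g (f z) * dbar f z := by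
  have h := hg.hasDerivAt.comp_hasFDerivAt z hf.hasFDerivAt
  simp only [Function.comp_def] at h
  simp only [dbar, h.fderiv, smul_apply, smul_eq_mul]
  ring

lemma dbar_pow (n : ℕ) (hf : DifferentiableAt ℝ f z) :
    dbar (fun w => f w ^ n) z = n * f z ^ (n - 1) * dbar f z := by
  rw [dbar_comp (g := fun w => w ^ n) (differentiableAt_pow n) hf, deriv_pow_field]

lemma dbar_const_mul (c : ℂ) (hf : DifferentiableAt ℝ f z) :
    dbar (fun w => c * f w) z = c * dbar f z := by
  rw [dbar_comp (g := fun w => c * w) (differentiableAt_id.const_mul c) hf,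
    deriv_const_mul_field', deriv_id'']
  ring

lemma dbar_id : dbar (fun w => w) z = 0 := by
  simp only [dbar, fderiv_fun_id, ContinuousLinearMap.id_apply]
  linear_combination (1 / 2 : ℂ) * I_sq

lemma dbar_conj : dbar (starRingEnd ℂ) z = 1 := by
  have h : HasFDerivAt (starRingEnd ℂ) conjCLE.toContinuousLinearMap z := conjCLE.hasFDerivAt
  simp only [dbar, h.fderiv, ContinuousLinearEquiv.coe_coe, conjCLE_apply, map_one, conj_I]
  linear_combination (-1 / 2 : ℂ) * I_sq

lemma contDiffAt_zstar {n : WithTop ℕ∞} (hz : z ≠ 0) : ContDiffAt ℝ n zstar z :=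
  conjCLE.contDiff.contDiffAt.inv (by simpa using hz)

lemma differentiableAt_zstar (hz : z ≠ 0) : DifferentiableAt ℝ zstar z :=
  (contDiffAt_zstar (n := 1) hz).differentiableAt one_ne_zero

lemma dbar_zstar (hz : z ≠ 0) : dbar zstar z = -zstar z ^ 2 := by
  have hc : starRingEnd ℂ z ≠ 0 := by simpa using hz
  unfold zstar
  rw [dbar_comp (g := fun w => w⁻¹) (differentiableAt_inv hc) conjCLE.differentiableAt,
    deriv_inv, dbar_conj, inv_pow, mul_one]

lemma dbar_extensionTerm (c : ℂ) (i : ℕ) {G : ℂ → ℂ} (hz : z ≠ 0)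
    (hG : DifferentiableAt ℂ G (zstar z)) :
    dbar (fun w => c * (zstar w - w) ^ i * G (zstar w)) z =
      -zstar z ^ 2 * (c *
        (i * (zstar z - z) ^ (i - 1) * G (zstar z) + (zstar z - z) ^ i * deriv G (zstar z))) := by
  have hzs := differentiableAt_zstar hz
  have hp : DifferentiableAt ℝ (fun w => zstar w - w) z := hzs.sub differentiableAt_fun_id
  have hpow : DifferentiableAt ℝ (fun w => (zstar w - w) ^ i) z := hp.pow i
  have hGz : DifferentiableAt ℝ (fun w => G (zstar w)) z := (hG.restrictScalars ℝ).comp z hzs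
  rw [dbar_mul (hpow.const_mul c) hGz, dbar_const_mul c hpow, dbar_pow i hp,
    dbar_sub hzs differentiableAt_fun_id, dbar_comp hG hzs, dbar_zstar hz, dbar_id]
  ring

lemma contDiffAt_extensionTerm {n : WithTop ℕ∞} (c : ℂ) (i : ℕ) {G : ℂ → ℂ} (hz : z ≠ 0)
    (hG : ContDiffAt ℂ n G (zstar z)) :
    ContDiffAt ℝ n (fun w => c * (zstar w - w) ^ i * G (zstar w)) z :=
  have hzs := contDiffAt_zstar (n := n) hz
  (contDiffAt_const.mul ((hzs.sub contDiffAt_id).pow i)).mul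
    ((hG.restrict_scalars ℝ).comp z hzs)

end WirtingerCalculus

lemma zstar_mem_ball {z : ℂ} (hz : 1 < ‖z‖) : zstar z ∈ ball (0 : ℂ) 1 := by
  simpa [zstar] using inv_lt_one_of_one_lt₀ hz

lemma DifferentiableOn.iteratedDeriv_of_isOpen {E : Type*} [NormedAddCommGroup E]
    [NormedSpace ℂ E] [CompleteSpace E] {f : ℂ → E} {s : Set ℂ} (hf : DifferentiableOn ℂ f s)
    (hs : IsOpen s) (i : ℕ) : DifferentiableOn ℂ (iteratedDeriv i f) s := by
  induction i with
  | zero => simpa using hf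
  | succ i ih => simpa [iteratedDeriv_succ] using ih.deriv hs

/-- The truncated `i - 1` at `i = 0` is harmless: that summand carries the factor `i = 0`. -/
lemma sum_range_alternating_taylor_telescope (n : ℕ) (p : ℂ) (G : ℕ → ℂ) :
    ∑ i ∈ Finset.range (n + 1),
      (-1 : ℂ) ^ i / i.factorial * (i * p ^ (i - 1) * G i + p ^ i * G (i + 1)) =
      (-1 : ℂ) ^ n / n.factorial * p ^ n * G (n + 1) := by
  induction n with
  | zero => simp
  | succ n ih =>
    rw [Finset.sum_range_succ, ih, Nat.add_sub_cancel, Nat.factorial_succ]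
    push_cast
    field_simp
    ring

theorem dbar_of_extension_general
    (F : ℂ → ℂ) (hF : DifferentiableOn ℂ F (ball (0 : ℂ) 1))
    (n : ℕ)
    (Ftil : ℂ → ℂ)
    (hFtil : ∀ z : ℂ, Ftil z =
      ∑ i ∈ Finset.range (n + 1),
        ((-1 : ℂ) ^ i / (Nat.factorial i : ℂ)) * (zstar z - z) ^ i *
          iteratedDeriv i F (zstar z)) :
    ContDiffOn ℝ 1 Ftil {z : ℂ | 1 < ‖z‖} ∧
    ∀ z : ℂ, 1 < ‖z‖ →
      dbar Ftil z = ((-1 : ℂ) ^ (n + 1) / (Nat.factorial n : ℂ)) *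
        (zstar z - z) ^ n * (zstar z) ^ 2 * iteratedDeriv (n + 1) F (zstar z) := by
  obtain rfl : Ftil = _ := funext hFtil
  have hD (i : ℕ) := hF.iteratedDeriv_of_isOpen isOpen_ball i
  have hterm (i : ℕ) {z : ℂ} (hz : 1 < ‖z‖) :=
    contDiffAt_extensionTerm (n := 1) ((-1 : ℂ) ^ i / i.factorial) i
      (norm_pos_iff.mp (by linarith))
      (((hD i).contDiffOn isOpen_ball).contDiffAt (isOpen_ball.mem_nhds (zstar_mem_ball hz)))
  refine ⟨fun z hz => (ContDiffAt.sum fun i _ => hterm i hz).contDiffWithinAt, fun z hz => ?_⟩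
  have hz0 : z ≠ 0 := norm_pos_iff.mp (by linarith)
  have hmem := isOpen_ball.mem_nhds (zstar_mem_ball hz)
  rw [dbar_sum _ fun i _ => (hterm i hz).differentiableAt one_ne_zero,
    Finset.sum_congr rfl fun i _ => dbar_extensionTerm _ i hz0 ((hD i).differentiableAt hmem)]
  simp only [← iteratedDeriv_succ, ← Finset.mul_sum]
  exact (congrArg _
    (sum_range_alternating_taylor_telescope n _ (iteratedDeriv · F (zstar z)))).trans (by ring)

/-- The explicit pseudoanalytic extension
`F̃_n(z) = Σ_{i=0}^{n} ((−1)^i/i!) (z* − z)^i F^{(i)}(z*)` is `C¹` on `{|z| > 1}`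
and its `∂̄`-derivative equals `((−1)^{n+1}/n!) (z* − z)^n (z*)² F^{(n+1)}(z*)`. -/
theorem dbar_of_extension
    (F : ℂ → ℂ) (hF : DifferentiableOn ℂ F (ball (0 : ℂ) 1))
    (n : ℕ) (hn : 1 ≤ n)
    (Ftil : ℂ → ℂ)
    (hFtil : ∀ z : ℂ, Ftil z =
      ∑ i ∈ Finset.range (n + 1),
        ((-1 : ℂ) ^ i / (Nat.factorial i : ℂ)) * (zstar z - z) ^ i *
          iteratedDeriv i F (zstar z)) :
    ContDiffOn ℝ 1 Ftil {z : ℂ | 1 < ‖z‖} ∧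
    ∀ z : ℂ, 1 < ‖z‖ →
      dbar Ftil z = ((-1 : ℂ) ^ (n + 1) / (Nat.factorial n : ℂ)) *
        (zstar z - z) ^ n * (zstar z) ^ 2 * iteratedDeriv (n + 1) F (zstar z) :=
  dbar_of_extension_general F hF n Ftil hFtil
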